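/- Let n ≥ 2 and let C = (C_{j;i}) be a real n×n matrix. There exists a torsion-type tensor T = (T_{ab}^c) satisfying all n compatibility equations (Σ_{a<b, c} σ_{ab;i}^c(y)·T_{ab}^c = 2·Σ_j C_{j;i}·y_j for all y ∈ ℝⁿ and all i ∈ {1,…,n}) if and only if C_{n;i} = 0 for every i ∈ {1,…,n}. -/

import Mathlib

open Finset

/-- The last index `n` of `{1,…,n}`, realized as the final element of `Fin n`. -/
def lastIdx (n : ℕ) (hn : 1 ≤ n) : Fin n := ⟨n - 1, by omega⟩

/-- The coefficient `σ_{ab;i}^c(y) = (δᵢᶜyₐ + δᵢᵃy_c)δ_bⁿ + (δᵢᵇyₐ − δᵢᵃy_b)δ_cⁿ` of the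
torsion component `T_{ab}^c` in the `i`-th compatibility equation of a Randers metric. -/
noncomputable def sigma (n : ℕ) (hn : 1 ≤ n) (a b c i : Fin n) (y : Fin n → ℝ) : ℝ :=
  ((if i = c then (1 : ℝ) else 0) * y a + (if i = a then (1 : ℝ) else 0) * y c) *
      (if b = lastIdx n hn then (1 : ℝ) else 0) +
    ((if i = b then (1 : ℝ) else 0) * y a - (if i = a then (1 : ℝ) else 0) * y b) *
      (if c = lastIdx n hn then (1 : ℝ) else 0)

/-- A torsion-type tensor: a family `T_{ab}^c` of reals, skew-symmetric in the lower
indices. -/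
def IsSkew (n : ℕ) (T : Fin n → Fin n → Fin n → ℝ) : Prop :=
  ∀ a b c, T a b c = - T b a c

/-- The left-hand side `Σ_{a<b, c} σ_{ab;i}^c(y)·T_{ab}^c` of the `i`-th compatibility
equation. -/
noncomputable def compatLHS (n : ℕ) (hn : 1 ≤ n) (T : Fin n → Fin n → Fin n → ℝ)
    (i : Fin n) (y : Fin n → ℝ) : ℝ :=
  ∑ a : Fin n, ∑ b : Fin n, ∑ c : Fin n,
    if a < b then sigma n hn a b c i y * T a b c else 0

/-! For a skew `T`, the contributions `a < b` and `b < a` of the second half of `σ` combine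
into a full sum, and the `i`-th equation becomes `∑ⱼ (T_{jn}^i + T_{in}^j + T_{ji}^n) yⱼ =
2 ∑ⱼ C_{j;i} yⱼ`. By skewness the coefficient of `yₙ` on the left vanishes, which forces
`C_{n;i} = 0`. Conversely, when the last row of `C` is zero, the tensor with
`T_{an}^c = C_{a;c}` for `a ≠ n` and `T_{ab}^n = C_{a;b} − C_{b;a}` for `a, b ≠ n` (all other
components zero apart from those forced by skewness) has coefficients exactly `2 C_{j;i}`. -/

theorem IsSkew.apply_self {n : ℕ} {T : Fin n → Fin n → Fin n → ℝ} (hT : IsSkew n T)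
    (a c : Fin n) : T a a c = 0 := by
  linarith [hT a a c]

theorem le_lastIdx {n : ℕ} (hn : 1 ≤ n) (a : Fin n) : a ≤ lastIdx n hn :=
  Fin.mk_le_mk.mpr (Nat.le_sub_one_of_lt a.isLt)

theorem sum_lt_kronecker_mul_skew {ι : Type*} [Fintype ι] [LinearOrder ι]
    (S : ι → ι → ℝ) (hS : ∀ a b, S a b = - S b a) (i : ι) (y : ι → ℝ) :
    ∑ a, ∑ b, (if a < b then
      ((if i = b then (1 : ℝ) else 0) * y a - (if i = a then (1 : ℝ) else 0) * y b) * S a b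
      else 0) = ∑ a, y a * S a i := by
  have summand_eq : ∀ a b, (if a < b then
      ((if i = b then (1 : ℝ) else 0) * y a - (if i = a then (1 : ℝ) else 0) * y b) * S a b
      else 0) = (if b = i then (if a < i then y a * S a i else 0) else 0)
        + (if a = i then (if i < b then y b * S b i else 0) else 0) := by
    intro a b
    by_cases hbi : b = i <;> by_cases hai : a = i <;> subst_vars
    · simp
    · simp [Ne.symm hai]
    · simp [Ne.symm hbi, hS a b]
    · simp [hai, hbi, Ne.symm hai, Ne.symm hbi]
  have lt_add_gt : ∀ a, (if a < i then y a * S a i else 0) + (if i < a then y a * S a i else 0)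
      = y a * S a i := by
    intro a
    rcases lt_trichotomy a i with h | rfl | h
    · simp [h, h.not_gt]
    · simp [show S a a = 0 by linarith [hS a a]]
    · simp [h, h.not_gt]
  simp only [summand_eq, sum_add_distrib, sum_ite_irrel, sum_const_zero, sum_ite_eq', mem_univ,
    if_true]
  rw [← sum_add_distrib]
  exact sum_congr rfl fun a _ => lt_add_gt a

theorem sum_sigma_mul (n : ℕ) (hn : 1 ≤ n) (T : Fin n → Fin n → Fin n → ℝ) (a b i : Fin n)
    (y : Fin n → ℝ) :
    ∑ c, sigma n hn a b c i y * T a b c =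
      (if b = lastIdx n hn then
        y a * T a b i + (if i = a then ∑ c, y c * T a b c else 0) else 0) +
      ((if i = b then (1 : ℝ) else 0) * y a - (if i = a then (1 : ℝ) else 0) * y b) *
        T a b (lastIdx n hn) := by
  simp only [sigma, add_mul, sum_add_distrib, ite_mul, one_mul, zero_mul, mul_ite, mul_one,
    mul_zero, sum_ite_irrel, sum_const_zero, sum_ite_eq, sum_ite_eq', mem_univ, if_true]

def compatCoeff (n : ℕ) (hn : 1 ≤ n) (T : Fin n → Fin n → Fin n → ℝ) (i j : Fin n) : ℝ :=
  T j (lastIdx n hn) i + T i (lastIdx n hn) j + T j i (lastIdx n hn)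

theorem compatLHS_eq_sum (n : ℕ) (hn : 1 ≤ n) {T : Fin n → Fin n → Fin n → ℝ} (hT : IsSkew n T)
    (i : Fin n) (y : Fin n → ℝ) :
    compatLHS n hn T i y = ∑ j, compatCoeff n hn T i j * y j := by
  have inner : ∀ a b, (∑ c, if a < b then sigma n hn a b c i y * T a b c else 0) =
      (if b = lastIdx n hn then (if a < lastIdx n hn then
        y a * T a b i + (if i = a then ∑ c, y c * T a b c else 0) else 0) else 0) +
      (if a < b then
        ((if i = b then (1 : ℝ) else 0) * y a - (if i = a then (1 : ℝ) else 0) * y b) *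
          T a b (lastIdx n hn) else 0) := by
    intro a b
    rw [sum_ite_irrel, sum_const_zero, sum_sigma_mul]
    split_ifs <;> simp_all
  have drop_lt_last : ∀ a, (if a < lastIdx n hn then y a * T a (lastIdx n hn) i +
        (if i = a then ∑ c, y c * T a (lastIdx n hn) c else 0) else 0)
      = y a * T a (lastIdx n hn) i + (if i = a then ∑ c, y c * T a (lastIdx n hn) c else 0) := by
    intro a
    rcases (le_lastIdx hn a).lt_or_eq with h | rfl
    · rw [if_pos h]
    · simp [hT.apply_self]
  simp only [compatLHS, inner, sum_add_distrib, sum_ite_eq', mem_univ, if_true, drop_lt_last,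
    sum_lt_kronecker_mul_skew (fun a b => T a b (lastIdx n hn)) (fun a b => hT a b _) i y]
  simp only [sum_ite_eq, mem_univ, if_true, compatCoeff, add_mul, sum_add_distrib,
    mul_comm (y _)]

theorem compatCoeff_lastIdx (n : ℕ) (hn : 1 ≤ n) {T : Fin n → Fin n → Fin n → ℝ}
    (hT : IsSkew n T) (i : Fin n) : compatCoeff n hn T i (lastIdx n hn) = 0 := by
  rw [compatCoeff, hT.apply_self, hT i]
  ring

noncomputable def compatSolution (n : ℕ) (hn : 1 ≤ n) (C : Fin n → Fin n → ℝ) (a b c : Fin n) :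
    ℝ :=
  (if b = lastIdx n hn then C a c else 0) - (if a = lastIdx n hn then C b c else 0) +
    (if a ≠ lastIdx n hn ∧ b ≠ lastIdx n hn ∧ c = lastIdx n hn then C a b - C b a else 0)

theorem isSkew_compatSolution (n : ℕ) (hn : 1 ≤ n) (C : Fin n → Fin n → ℝ) :
    IsSkew n (compatSolution n hn C) := by
  intro a b c
  simp only [compatSolution]
  split_ifs <;> simp_all

theorem compatCoeff_compatSolution (n : ℕ) (hn : 1 ≤ n) {C : Fin n → Fin n → ℝ}
    (hC : ∀ i, C (lastIdx n hn) i = 0) (i j : Fin n) :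
    compatCoeff n hn (compatSolution n hn C) i j = 2 * C j i := by
  simp only [compatCoeff, compatSolution]
  by_cases hi : i = lastIdx n hn <;> by_cases hj : j = lastIdx n hn <;> simp [hi, hj, hC] <;> ring

/-- there exists a torsion-type tensor `T` satisfying all `n`
compatibility equations if and only if `C_{n;i} = 0` for every `i`. -/
theorem compatibility_solvability (n : ℕ) (hn : 2 ≤ n) (C : Fin n → Fin n → ℝ) :
    (∃ T : Fin n → Fin n → Fin n → ℝ, IsSkew n T ∧
        ∀ i : Fin n, ∀ y : Fin n → ℝ,
          compatLHS n (by omega) T i y = 2 * ∑ j : Fin n, C j i * y j) ↔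
      ∀ i : Fin n, C (lastIdx n (by omega)) i = 0 := by
  have hn' : 1 ≤ n := by omega
  constructor
  · rintro ⟨T, hT, hcompat⟩ i
    simpa [compatLHS_eq_sum n hn' hT, Pi.single_apply, compatCoeff_lastIdx n hn' hT] using
      hcompat i (Pi.single (lastIdx n hn') 1)
  · intro hC
    refine ⟨compatSolution n hn' C, isSkew_compatSolution n hn' C, fun i y => ?_⟩
    rw [compatLHS_eq_sum n hn' (isSkew_compatSolution n hn' C), mul_sum]
    exact sum_congr rfl fun j _ => by rw [compatCoeff_compatSolution n hn' hC, mul_assoc]
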